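/- Let r ≥ 2. Then for all j, k ∈ {1, …, r}: E[(((r²−1)/4)·ρ(j) + ρ(j)³)² · ρ(j)²] ≤ 0.00234 r⁸, and E[(((r²−1)/4)·ρ(j) + ρ(j)³)² · ρ(k)²] ≤ 0.00240 r⁸. -/

import Mathlib

open MeasureTheory Finset Real

noncomputable section

instance instMSPerm (r : ℕ) : MeasurableSpace (Equiv.Perm (Fin r)) := ⊤

/-- The law of a single uniformly random permutation of `{1, …, r}`. -/
def permMeasure (r : ℕ) : Measure (Equiv.Perm (Fin r)) :=
  (PMF.uniformOfFintype (Equiv.Perm (Fin r))).toMeasure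

/-- `ρ(j) = π(j) - (r+1)/2`, where `π(j) ∈ {1, …, r}` (a permutation of `Fin r` assigns
values in `{0, …, r-1}`, hence the `+ 1`). -/
def rho1 (r : ℕ) (j : Fin r) (g : Equiv.Perm (Fin r)) : ℝ :=
  ((g j : ℕ) : ℝ) + 1 - ((r : ℝ) + 1) / 2

end

/-! Under a uniform permutation `π`, the value `π j` is uniform on `Fin r`, and for `j ≠ k` the
pair `(π j, π k)` is uniform on the pairs of distinct values. Both expectations are therefore
polynomials in the centred power sums `∑ v, (v + 1 - (r + 1) / 2) ^ m` for `m = 2, 4, 6, 8`,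
whose closed forms follow by induction from `r` to `r + 2`: the centred values for `r + 2` are
those for `r` together with `±(r + 1) / 2`. Expanded in powers of `r - 2`, the differences
between the claimed bounds and these polynomials have nonnegative coefficients. -/

section PermSums

variable {α : Type*} [Fintype α] [DecidableEq α]

theorem sum_perm_apply_eq {M : Type*} [AddCommMonoid M] (F : α → M) (i j : α) :
    ∑ g : Equiv.Perm α, F (g i) = ∑ g : Equiv.Perm α, F (g j) :=
  Fintype.sum_equiv (Equiv.mulRight (Equiv.swap i j)) _ _ fun g => by simp

theorem card_nsmul_sum_perm_apply {M : Type*} [AddCommMonoid M] (F : α → M) (j : α) :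
    Fintype.card α • ∑ g : Equiv.Perm α, F (g j) = (Fintype.card α).factorial • ∑ v, F v :=
  calc Fintype.card α • ∑ g : Equiv.Perm α, F (g j)
      = ∑ i : α, ∑ g : Equiv.Perm α, F (g i) := by simp [sum_perm_apply_eq F _ j]
    _ = ∑ g : Equiv.Perm α, ∑ i, F (g i) := sum_comm
    _ = ∑ g : Equiv.Perm α, ∑ v, F v := by simp only [Equiv.sum_comp]
    _ = (Fintype.card α).factorial • ∑ v, F v := by simp [Fintype.card_perm]

variable {R : Type*}

theorem sum_perm_apply_mul_apply_eq [CommSemiring R] (A B : α → R) {j k l : α}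
    (hk : j ≠ k) (hl : j ≠ l) :
    ∑ g : Equiv.Perm α, A (g j) * B (g k) = ∑ g : Equiv.Perm α, A (g j) * B (g l) :=
  Fintype.sum_equiv (Equiv.mulRight (Equiv.swap k l)) _ _ fun g => by
    simp [Equiv.swap_apply_of_ne_of_ne hk hl]

theorem card_sub_one_mul_sum_perm_apply_mul_apply [CommRing R] (A B : α → R) {j k : α}
    (hjk : j ≠ k) :
    ((Fintype.card α : R) - 1) * ∑ g : Equiv.Perm α, A (g j) * B (g k)
      = ∑ g : Equiv.Perm α, A (g j) * (∑ v, B v - B (g j)) := by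
  have hcompl (g : Equiv.Perm α) : ∑ v, B v - B (g j) = ∑ l ∈ {j}ᶜ, B (g l) := by
    rw [← Equiv.sum_comp g B, Fintype.sum_eq_add_sum_compl j, add_sub_cancel_left]
  calc ((Fintype.card α : R) - 1) * ∑ g : Equiv.Perm α, A (g j) * B (g k)
      = ∑ l ∈ ({j}ᶜ : Finset α), ∑ g : Equiv.Perm α, A (g j) * B (g l) := by
        rw [← sum_congr rfl fun l hl =>
          sum_perm_apply_mul_apply_eq A B hjk (Ne.symm (by simpa using hl))]
        rw [sum_const, card_compl, card_singleton, nsmul_eq_mul,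
          Nat.cast_sub (Fintype.card_pos_iff.mpr ⟨j⟩), Nat.cast_one]
    _ = ∑ g : Equiv.Perm α, A (g j) * (∑ v, B v - B (g j)) := by
        simp only [hcompl, mul_sum]
        exact sum_comm

theorem card_mul_card_sub_one_mul_sum_perm_apply_mul_apply [CommRing R] (A B : α → R)
    {j k : α} (hjk : j ≠ k) :
    (Fintype.card α : R) * ((Fintype.card α : R) - 1) * ∑ g : Equiv.Perm α, A (g j) * B (g k)
      = (Fintype.card α).factorial * ((∑ v, A v) * (∑ v, B v) - ∑ v, A v * B v) := by
  have hA := card_nsmul_sum_perm_apply A j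
  have hAB := card_nsmul_sum_perm_apply (fun v => A v * B v) j
  simp only [nsmul_eq_mul] at hA hAB
  rw [mul_assoc, card_sub_one_mul_sum_perm_apply_mul_apply A B hjk]
  simp only [mul_sub, sum_sub_distrib, ← sum_mul]
  linear_combination (∑ v, B v) * hA - hAB

end PermSums

theorem integral_permMeasure (r : ℕ) (f : Equiv.Perm (Fin r) → ℝ) :
    ∫ p, f p ∂permMeasure r = (∑ g, f g) / r.factorial := by
  rw [permMeasure, PMF.integral_eq_sum]
  simp [PMF.uniformOfFintype_apply, Fintype.card_perm, div_eq_inv_mul, mul_sum]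

theorem integral_permMeasure_comp_apply {r : ℕ} (j : Fin r) (F : Fin r → ℝ) :
    ∫ p, F (p j) ∂permMeasure r = (∑ v, F v) / r := by
  have h := card_nsmul_sum_perm_apply F j
  simp only [nsmul_eq_mul, Fintype.card_fin] at h
  have hr : (r : ℝ) ≠ 0 := by exact_mod_cast j.pos.ne'
  rw [integral_permMeasure, div_eq_div_iff (by positivity) hr, mul_comm, h, mul_comm]

theorem integral_permMeasure_mul_comp_apply {r : ℕ} {j k : Fin r} (hjk : j ≠ k)
    (A B : Fin r → ℝ) :
    ∫ p, A (p j) * B (p k) ∂permMeasure r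
      = ((∑ v, A v) * (∑ v, B v) - ∑ v, A v * B v) / (r * (r - 1)) := by
  have h := card_mul_card_sub_one_mul_sum_perm_apply_mul_apply A B hjk
  simp only [Fintype.card_fin] at h
  have hr : 1 < r := by simpa using Fintype.one_lt_card_iff.mpr ⟨j, k, hjk⟩
  have hr' : (r : ℝ) * (r - 1) ≠ 0 :=
    mul_ne_zero (by positivity) (sub_ne_zero.mpr (by exact_mod_cast hr.ne'))
  rw [integral_permMeasure, div_eq_div_iff (by positivity) hr', mul_comm, h, mul_comm]

noncomputable def centeredRank (r : ℕ) (v : Fin r) : ℝ :=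
  ((v : ℕ) : ℝ) + 1 - ((r : ℝ) + 1) / 2

theorem sum_centeredRank_pow_add_two (m r : ℕ) :
    ∑ v : Fin (r + 2), centeredRank (r + 2) v ^ m
      = (-(((r : ℝ) + 1) / 2)) ^ m + ∑ v : Fin r, centeredRank r v ^ m
        + (((r : ℝ) + 1) / 2) ^ m := by
  rw [Fin.sum_univ_succ, Fin.sum_univ_castSucc, ← add_assoc]
  simp only [centeredRank, Fin.val_zero, Fin.val_succ, Fin.val_castSucc, Fin.val_last]
  push_cast
  congr 2
  · ring
  · exact sum_congr rfl fun i _ => by ring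
  · ring

theorem sum_centeredRank_sq (r : ℕ) :
    ∑ v : Fin r, centeredRank r v ^ 2 = (r : ℝ) * ((r : ℝ) ^ 2 - 1) / 12 := by
  induction r using Nat.twoStepInduction with
  | zero => simp
  | one => simp [centeredRank]
  | more r ih _ => rw [sum_centeredRank_pow_add_two, ih]; push_cast; ring

theorem sum_centeredRank_pow_four (r : ℕ) :
    ∑ v : Fin r, centeredRank r v ^ 4
      = (r : ℝ) * ((r : ℝ) ^ 2 - 1) * (3 * (r : ℝ) ^ 2 - 7) / 240 := by
  induction r using Nat.twoStepInduction with
  | zero => simp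
  | one => simp [centeredRank]
  | more r ih _ => rw [sum_centeredRank_pow_add_two, ih]; push_cast; ring

theorem sum_centeredRank_pow_six (r : ℕ) :
    ∑ v : Fin r, centeredRank r v ^ 6
      = (r : ℝ) * ((r : ℝ) ^ 2 - 1) * (3 * (r : ℝ) ^ 4 - 18 * (r : ℝ) ^ 2 + 31) / 1344 := by
  induction r using Nat.twoStepInduction with
  | zero => simp
  | one => simp [centeredRank]
  | more r ih _ => rw [sum_centeredRank_pow_add_two, ih]; push_cast; ring

theorem sum_centeredRank_pow_eight (r : ℕ) :
    ∑ v : Fin r, centeredRank r v ^ 8 = (r : ℝ) * ((r : ℝ) ^ 2 - 1)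
      * (5 * (r : ℝ) ^ 6 - 55 * (r : ℝ) ^ 4 + 239 * (r : ℝ) ^ 2 - 381) / 11520 := by
  induction r using Nat.twoStepInduction with
  | zero => simp
  | one => simp [centeredRank]
  | more r ih _ => rw [sum_centeredRank_pow_add_two, ih]; push_cast; ring

theorem sum_mul_add_pow_three_sq_mul_pow {ι R : Type*} [CommSemiring R] (s : Finset ι)
    (x : ι → R) (a : R) (n : ℕ) :
    ∑ i ∈ s, (a * x i + x i ^ 3) ^ 2 * x i ^ n
      = a ^ 2 * ∑ i ∈ s, x i ^ (n + 2) + 2 * a * ∑ i ∈ s, x i ^ (n + 4)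
        + ∑ i ∈ s, x i ^ (n + 6) := by
  simp only [mul_sum, ← sum_add_distrib]
  exact sum_congr rfl fun i _ => by ring

section Bounds

variable {r : ℕ}

local notation "S" m => ∑ v : Fin r, centeredRank r v ^ m

theorem sum_cubic_combination_sq_mul_sq_le (hr : 2 ≤ r) :
    (((r : ℝ) ^ 2 - 1) / 4) ^ 2 * (S 4) + 2 * (((r : ℝ) ^ 2 - 1) / 4) * (S 6) + (S 8)
      ≤ 0.00234 * (r : ℝ) ^ 8 * r := by
  rw [sum_centeredRank_pow_four, sum_centeredRank_pow_six, sum_centeredRank_pow_eight]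
  have hs : (0 : ℝ) ≤ r - 2 := by rw [sub_nonneg]; exact_mod_cast hr
  linarith [pow_nonneg hs 2, pow_nonneg hs 3, pow_nonneg hs 4, pow_nonneg hs 5, pow_nonneg hs 6,
    pow_nonneg hs 7, pow_nonneg hs 8, pow_nonneg hs 9]

theorem sum_cubic_combination_sq_mul_sum_sq_sub_le (hr : 2 ≤ r) :
    ((((r : ℝ) ^ 2 - 1) / 4) ^ 2 * (S 2) + 2 * (((r : ℝ) ^ 2 - 1) / 4) * (S 4) + (S 6)) * (S 2)
      - ((((r : ℝ) ^ 2 - 1) / 4) ^ 2 * (S 4) + 2 * (((r : ℝ) ^ 2 - 1) / 4) * (S 6) + (S 8))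
      ≤ 0.00240 * (r : ℝ) ^ 8 * (r * (r - 1)) := by
  rw [sum_centeredRank_sq, sum_centeredRank_pow_four, sum_centeredRank_pow_six,
    sum_centeredRank_pow_eight]
  have hs : (0 : ℝ) ≤ r - 2 := by rw [sub_nonneg]; exact_mod_cast hr
  linarith [pow_nonneg hs 2, pow_nonneg hs 3, pow_nonneg hs 4, pow_nonneg hs 5, pow_nonneg hs 6,
    pow_nonneg hs 7, pow_nonneg hs 8, pow_nonneg hs 9, pow_nonneg hs 10]

end Bounds

theorem rho1_eq_centeredRank (r : ℕ) (j : Fin r) (g : Equiv.Perm (Fin r)) :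
    rho1 r j g = centeredRank r (g j) :=
  rfl

/-- **Lemma 3.5 (Gaunt–Reinert).** For `r ≥ 2` and all `j, k ∈ {1, …, r}`,
`E[(((r²−1)/4)ρ(j) + ρ(j)³)² ρ(j)²] ≤ 0.00234 r⁸` and
`E[(((r²−1)/4)ρ(j) + ρ(j)³)² ρ(k)²] ≤ 0.00240 r⁸`. -/
theorem rho_cubic_combination_bounds (r : ℕ) (hr : 2 ≤ r) (j k : Fin r) :
    (∫ p, (((r : ℝ) ^ 2 - 1) / 4 * rho1 r j p + (rho1 r j p) ^ 3) ^ 2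
        * (rho1 r j p) ^ 2 ∂(permMeasure r) ≤ 0.00234 * (r : ℝ) ^ 8) ∧
    ∫ p, (((r : ℝ) ^ 2 - 1) / 4 * rho1 r j p + (rho1 r j p) ^ 3) ^ 2
        * (rho1 r k p) ^ 2 ∂(permMeasure r) ≤ 0.00240 * (r : ℝ) ^ 8 := by
  simp only [rho1_eq_centeredRank]
  set a : ℝ := ((r : ℝ) ^ 2 - 1) / 4
  have hr2 : (2 : ℝ) ≤ r := by exact_mod_cast hr
  have hA := sum_mul_add_pow_three_sq_mul_pow univ (centeredRank r) a 0
  have hAB := sum_mul_add_pow_three_sq_mul_pow univ (centeredRank r) a 2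
  simp only [pow_zero, mul_one, Nat.reduceAdd] at hA hAB
  have hdiag : ∫ p, (a * centeredRank r (p j) + centeredRank r (p j) ^ 3) ^ 2
      * centeredRank r (p j) ^ 2 ∂permMeasure r ≤ 0.00234 * (r : ℝ) ^ 8 := by
    rw [integral_permMeasure_comp_apply j fun v =>
      (a * centeredRank r v + centeredRank r v ^ 3) ^ 2 * centeredRank r v ^ 2, hAB,
      div_le_iff₀ (by linarith)]
    exact sum_cubic_combination_sq_mul_sq_le hr
  refine ⟨hdiag, ?_⟩
  rcases eq_or_ne j k with rfl | hjk
  · exact hdiag.trans (by gcongr; norm_num)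
  · rw [integral_permMeasure_mul_comp_apply hjk
      (fun v => (a * centeredRank r v + centeredRank r v ^ 3) ^ 2) (fun v => centeredRank r v ^ 2),
      hA, hAB, div_le_iff₀ (mul_pos (by linarith) (by linarith))]
    exact sum_cubic_combination_sq_mul_sum_sq_sub_le hr
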